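/- arXiv:2601.11278 — 7 statements merged into one kernel-verified Lean document; each statement's English description precedes it below -/
import Mathlib

section
/- Let n₂, n₃ be natural numbers and let T₄₂ be an m × n₂ matrix and T₃₁ an n₃ × k matrix over a field F. The subspace {X ∈ Mat(n₂, n₃, F) | T₄₂ * X = 0 and X * T₃₁ = 0} has codimension n₃·rank(T₄₂) + n₂·rank(T₃₁) − rank(T₃₁)·rank(T₄₂) in Mat(n₂, n₃, F). -/
/-!
A matrix `X` with `P * X = 0` and `X * Q = 0` is the same as a linear map from the cokernel of `Q`
to the kernel of `P`, via `X = ι ∘ g ∘ π`. Hence the subspace has dimension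
`(n₃ - rank T₃₁) * (n₂ - rank T₄₂)`, and the codimension formula is the expansion of
`n₂ n₃ - (n₃ - b) (n₂ - a)`.
-/

open Module

namespace LinearMap

section CommRing

variable {R U V W W' : Type*} [CommRing R] [AddCommGroup U] [AddCommGroup V] [AddCommGroup W]
  [AddCommGroup W'] [Module R U] [Module R V] [Module R W] [Module R W']
  (A : W →ₗ[R] W') (B : U →ₗ[R] V)

def sandwichKer : Submodule R (V →ₗ[R] W) :=
  ker (compRight R A) ⊓ ker (lcomp R W B)

theorem mem_sandwichKer {f : V →ₗ[R] W} : f ∈ sandwichKer A B ↔ A ∘ₗ f = 0 ∧ f ∘ₗ B = 0 :=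
  Iff.rfl

def compMkQSubtype : (V ⧸ range B →ₗ[R] ker A) →ₗ[R] V →ₗ[R] W :=
  compRight R (ker A).subtype ∘ₗ lcomp R (ker A) (range B).mkQ

theorem compMkQSubtype_apply (g : V ⧸ range B →ₗ[R] ker A) :
    compMkQSubtype A B g = (ker A).subtype ∘ₗ g ∘ₗ (range B).mkQ :=
  rfl

theorem compMkQSubtype_injective : Function.Injective (compMkQSubtype A B) := by
  intro g h hgh
  ext v
  exact congr($hgh v)

theorem range_compMkQSubtype : range (compMkQSubtype A B) = sandwichKer A B := by
  ext f
  rw [mem_range, mem_sandwichKer]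
  constructor
  · rintro ⟨g, rfl⟩
    constructor <;> ext v
    · simp [compMkQSubtype_apply]
    · simp [compMkQSubtype_apply, (Submodule.Quotient.mk_eq_zero _).2 (mem_range_self B v)]
  · rintro ⟨hA, hB⟩
    have hf : ∀ v, f v ∈ ker A := fun v => congr($hA v)
    refine ⟨(range B).liftQ (f.codRestrict _ hf) ?_, rfl⟩
    rintro _ ⟨u, rfl⟩
    exact Subtype.ext congr($hB u)

noncomputable def sandwichKerEquiv : (V ⧸ range B →ₗ[R] ker A) ≃ₗ[R] sandwichKer A B :=
  (LinearEquiv.ofInjective _ (compMkQSubtype_injective A B)).trans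
    (LinearEquiv.ofEq _ _ (range_compMkQSubtype A B))

end CommRing

theorem finrank_sandwichKer {K U V W W' : Type*} [Field K] [AddCommGroup U] [AddCommGroup V]
    [AddCommGroup W] [AddCommGroup W'] [Module K U] [Module K V] [Module K W] [Module K W']
    [FiniteDimensional K V] [FiniteDimensional K W] (A : W →ₗ[K] W') (B : U →ₗ[K] V) :
    finrank K (sandwichKer A B)
      = (finrank K V - finrank K (range B)) * (finrank K W - finrank K (range A)) := by
  rw [← (sandwichKerEquiv A B).finrank_eq, finrank_linearMap, Submodule.finrank_quotient,
    ← A.finrank_range_add_finrank_ker, Nat.add_sub_cancel_left]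

end LinearMap

namespace Matrix

variable {F : Type*} [Field F] {l m n o : Type*}
  [Fintype m] [DecidableEq m] [Fintype n] [DecidableEq n] [Fintype o] [DecidableEq o]
  (P : Matrix l m F) (Q : Matrix n o F) (S : Submodule F (Matrix m n F))

theorem map_toLin'_eq_sandwichKer (hS : ∀ X, X ∈ S ↔ P * X = 0 ∧ X * Q = 0) :
    S.map (toLin' : Matrix m n F ≃ₗ[F] (n → F) →ₗ[F] m → F).toLinearMap
      = LinearMap.sandwichKer (toLin' P) (toLin' Q) := by
  ext f
  obtain ⟨X, rfl⟩ := toLin'.surjective f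
  simp only [Submodule.mem_map_equiv, LinearEquiv.symm_apply_apply, hS,
    LinearMap.mem_sandwichKer, ← toLin'_mul, LinearEquiv.map_eq_zero_iff]

theorem finrank_of_mul_eq_zero_and_mul_eq_zero (hS : ∀ X, X ∈ S ↔ P * X = 0 ∧ X * Q = 0) :
    finrank F S = (Fintype.card n - Q.rank) * (Fintype.card m - P.rank) := by
  rw [← (toLin' : Matrix m n F ≃ₗ[F] _).finrank_map_eq, map_toLin'_eq_sandwichKer P Q S hS,
    LinearMap.finrank_sandwichKer, rank, rank, ← toLin'_apply', ← toLin'_apply']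
  simp only [finrank_fintype_fun_eq_card]

end Matrix

theorem Nat.mul_sub_sub_mul_sub {a b p q : ℕ} (ha : a ≤ p) (hb : b ≤ q) :
    p * q - (q - b) * (p - a) = q * a + p * b - b * a := by
  have h₁ : (q - b) * (p - a) ≤ p * q := by
    rw [Nat.mul_comm p]
    exact Nat.mul_le_mul (Nat.sub_le q b) (Nat.sub_le p a)
  have h₂ : b * a ≤ q * a + p * b := (Nat.mul_le_mul_right a hb).trans (Nat.le_add_right _ _)
  zify [ha, hb, h₁, h₂]
  ring

/-- The subspace `{X | T₄₂ * X = 0 ∧ X * T₃₁ = 0}` of `Mat(n₂, n₃, F)` has codimension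
`n₃·rank T₄₂ + n₂·rank T₃₁ − rank T₃₁ · rank T₄₂`. -/
theorem stmt0 {F : Type*} [Field F] (n₂ n₃ m k : ℕ)
    (T₄₂ : Matrix (Fin m) (Fin n₂) F) (T₃₁ : Matrix (Fin n₃) (Fin k) F)
    (S : Submodule F (Matrix (Fin n₂) (Fin n₃) F))
    (hS : ∀ X : Matrix (Fin n₂) (Fin n₃) F, X ∈ S ↔ T₄₂ * X = 0 ∧ X * T₃₁ = 0) :
    finrank F (Matrix (Fin n₂) (Fin n₃) F) - finrank F S
      = n₃ * T₄₂.rank + n₂ * T₃₁.rank - T₃₁.rank * T₄₂.rank := by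
  rw [Matrix.finrank_of_mul_eq_zero_and_mul_eq_zero T₄₂ T₃₁ S hS, finrank_matrix,
    Fintype.card_fin, Fintype.card_fin, finrank_self, mul_one]
  exact Nat.mul_sub_sub_mul_sub T₄₂.rank_le_width T₃₁.rank_le_height
end

section
/- Let a be a finite-dimensional nilpotent associative algebra over F_q, G = 1 + a, λ ∈ a*, and let g^λ = {x ∈ a | λ(xy − yx) = 0 for all y ∈ a}. Then the stabilizer of λ under the coadjoint action of G equals 1 + g^λ, and the cardinality of the coadjoint orbit of λ equals q^(dim a − dim g^λ). -/
/-!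
Conjugation by a unit `g` of the unitization permutes the ideal `a`, so substituting `v = g w`
shows that `g` fixes `λ` iff `λ(w g) = λ(g w)` for all `w ∈ a`; for `g = 1 + x` this says
exactly `x ∈ g^λ`. Since `a` is nilpotent every `1 + x` is invertible, so `x ↦ 1 + x`
identifies `a` with `G` and `g^λ` with the stabilizer of `λ`, and orbit–stabilizer gives
`q ^ dim a / q ^ dim g^λ`.
-/

open Unitization Module

variable {F : Type*} [Field F] [Fintype F]
  (a : Type*) [NonUnitalRing a] [Module F a] [SMulCommClass F a a] [IsScalarTower F a a]

/-- The coadjoint action `(Ad*(g)λ)(x) = λ(g⁻¹ x g)`. -/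
noncomputable def coAd (g : (Unitization F a)ˣ) (l : Module.Dual F a) : Module.Dual F a :=
  l ∘ₗ (sndHom F F a) ∘ₗ (LinearMap.mulRight F ((g : Unitization F a))) ∘ₗ
    (LinearMap.mulLeft F (((g⁻¹ : (Unitization F a)ˣ) : Unitization F a))) ∘ₗ (inrHom F F a)

namespace Unitization

lemma inr_snd_of_fst_eq_zero {R A : Type*} [Zero R] [Zero A] {p : Unitization R A}
    (hp : p.fst = 0) :
    (inr p.snd : Unitization R A) = p := by
  ext <;> simp [hp]

lemma eq_one_add_inr_snd_of_fst_eq_one {R A : Type*} [AddZeroClass R] [One R] [AddZeroClass A]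
    {p : Unitization R A} (hp : p.fst = 1) :
    p = 1 + inr p.snd := by
  simpa [hp] using p.inl_fst_add_inr_snd_eq.symm

variable {R A : Type*} [CommSemiring R] [NonUnitalSemiring A] [Module R A]
  [IsScalarTower R A A] [SMulCommClass R A A]

lemma mem_unitsFstOne_iff_exists_eq_one_add_inr {g : (Unitization R A)ˣ} :
    g ∈ unitsFstOne R A ↔ ∃ x : A, (g : Unitization R A) = 1 + inr x := by
  refine ⟨fun hg => ⟨_, eq_one_add_inr_snd_of_fst_eq_one hg⟩, ?_⟩
  rintro ⟨x, hx⟩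
  simp [hx]

noncomputable def unitsFstOneEquiv (hunit : ∀ x : A, IsUnit (1 + inr x : Unitization R A)) :
    unitsFstOne R A ≃ A where
  toFun g := g.val.val.snd
  invFun x := ⟨(hunit x).unit, by simp⟩
  left_inv g := Subtype.ext <| Units.ext <|
    (eq_one_add_inr_snd_of_fst_eq_one (unitsFstOne_val_val_fst g)).symm
  right_inv x := by simp

end Unitization

section CoadjointAction

variable {K A : Type*} [Field K] [NonUnitalRing A] [Module K A] [SMulCommClass K A A]
  [IsScalarTower K A A]

lemma coAd_apply (g : (Unitization K A)ˣ) (l : Module.Dual K A) (v : A) :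
    coAd A g l v = l (g⁻¹.val * inr v * g.val).snd := rfl

lemma coAd_eq_self_iff (g : (Unitization K A)ˣ) (l : Module.Dual K A) :
    coAd A g l = l ↔ ∀ w : A, l (inr w * g.val).snd = l (g.val * inr w).snd := by
  constructor
  · intro h w
    have := LinearMap.congr_fun h (g.val * inr w).snd
    rwa [coAd_apply, inr_snd_of_fst_eq_zero (by simp), Units.inv_mul_cancel_left] at this
  · intro h
    ext v
    have := h (g⁻¹.val * inr v).snd
    rwa [inr_snd_of_fst_eq_zero (by simp), Units.mul_inv_cancel_left, snd_inr] at this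

lemma coAd_eq_self_iff_of_eq_one_add_inr {g : (Unitization K A)ˣ} {x : A}
    (hg : (g : Unitization K A) = 1 + inr x) (l : Module.Dual K A) :
    coAd A g l = l ↔ ∀ y : A, l (x * y - y * x) = 0 := by
  rw [coAd_eq_self_iff]
  simp only [hg, mul_add, add_mul, mul_one, one_mul, ← inr_mul, snd_add, snd_inr, map_add,
    add_right_inj, map_sub, sub_eq_zero]
  exact forall_congr' fun y => eq_comm

noncomputable local instance coAdAction : MulAction (Unitization K A)ˣ (Module.Dual K A) where
  smul := coAd A
  one_smul l := by
    ext v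
    show coAd A 1 l v = l v
    simp [coAd_apply]
  mul_smul g h l := by
    ext v
    show coAd A (g * h) l v = coAd A g (coAd A h l) v
    rw [coAd_apply, coAd_apply, coAd_apply, inr_snd_of_fst_eq_zero (by simp)]
    simp only [mul_inv_rev, Units.val_mul, mul_assoc]

lemma mem_stabilizer_unitsFstOne_iff {l : Module.Dual K A} {S : Submodule K A}
    (hS : ∀ x : A, x ∈ S ↔ ∀ y : A, l (x * y - y * x) = 0) (g : unitsFstOne K A) :
    g ∈ MulAction.stabilizer (unitsFstOne K A) l ↔ g.val.val.snd ∈ S := by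
  rw [MulAction.mem_stabilizer_iff, Subgroup.smul_def, hS]
  exact coAd_eq_self_iff_of_eq_one_add_inr
    (eq_one_add_inr_snd_of_fst_eq_one (unitsFstOne_val_val_fst g)) l

lemma natCard_coAd_orbit [Finite K] [FiniteDimensional K A]
    (hunit : ∀ x : A, IsUnit (1 + inr x : Unitization K A)) {l : Module.Dual K A}
    {S : Submodule K A} (hS : ∀ x : A, x ∈ S ↔ ∀ y : A, l (x * y - y * x) = 0) :
    Nat.card {μ : Module.Dual K A | ∃ g ∈ unitsFstOne K A, coAd A g l = μ}
      = Nat.card K ^ (finrank K A - finrank K S) := by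
  have horbit : {μ : Module.Dual K A | ∃ g ∈ unitsFstOne K A, coAd A g l = μ}
      = MulAction.orbit (unitsFstOne K A) l := by
    ext μ
    simp only [Set.mem_ofPred_eq, MulAction.mem_orbit_iff, Subtype.exists, Subgroup.mk_smul,
      exists_prop]
    rfl
  have hG : Nat.card (unitsFstOne K A) = Nat.card K ^ finrank K A := by
    rw [Nat.card_congr (unitsFstOneEquiv hunit), Module.natCard_eq_pow_finrank (K := K) (V := A)]
  have hstab : Nat.card (MulAction.stabilizer (unitsFstOne K A) l) = Nat.card K ^ finrank K S := by
    rw [Nat.card_congr ((unitsFstOneEquiv hunit).subtypeEquiv (mem_stabilizer_unitsFstOne_iff hS)),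
      Module.natCard_eq_pow_finrank (K := K) (V := S)]
  have horbit_stab := (MulAction.stabilizer (unitsFstOne K A) l).index_mul_card
  rw [MulAction.index_stabilizer, ← horbit, hG, hstab] at horbit_stab
  rw [Nat.card_coe_set_eq, ← Nat.pow_div (Submodule.finrank_le S) Nat.card_pos, ← horbit_stab,
    Nat.mul_div_cancel _ (pow_pos Nat.card_pos _)]

end CoadjointAction

/-- For a finite-dimensional nilpotent associative algebra `a` over `F_q`, `G = 1 + a`,
`λ ∈ a*`, and `g^λ = {x | λ(xy − yx) = 0 ∀ y}`: the stabilizer of `λ` under the coadjoint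
action is `1 + g^λ`, and the coadjoint orbit of `λ` has cardinality
`q^(dim a − dim g^λ)`. -/
theorem stmt7 [FiniteDimensional F a]
    (hnil : ∃ n : ℕ, 0 < n ∧ ∀ f : Fin n → a,
      (List.ofFn (fun i => (inr (f i) : Unitization F a))).prod = 0)
    (lam : Module.Dual F a)
    (glam : Submodule F a)
    (hglam : ∀ x : a, x ∈ glam ↔ ∀ y : a, lam (x * y - y * x) = 0) :
    (∀ g : (Unitization F a)ˣ, (∃ x : a, (g : Unitization F a) = 1 + inr x) →
      (coAd a g lam = lam ↔ ∃ z ∈ glam, (g : Unitization F a) = 1 + inr z)) ∧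
    Nat.card {mu : Module.Dual F a |
        ∃ g : (Unitization F a)ˣ, (∃ x : a, (g : Unitization F a) = 1 + inr x) ∧
          coAd a g lam = mu}
      = Fintype.card F ^ (finrank F a - finrank F glam) := by
  obtain ⟨n, -, hn⟩ := hnil
  have hunit (x : a) : IsUnit (1 + inr x : Unitization F a) :=
    IsNilpotent.isUnit_one_add ⟨n, by simpa using hn fun _ => x⟩
  refine ⟨fun g ⟨x, hx⟩ => ?_, ?_⟩
  · rw [coAd_eq_self_iff_of_eq_one_add_inr hx, ← hglam]
    refine ⟨fun hx' => ⟨x, hx', hx⟩, fun ⟨z, hz, hgz⟩ => ?_⟩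
    rwa [← inr_injective (add_left_cancel (hgz.symm.trans hx))]
  · simp_rw [← mem_unitsFstOne_iff_exists_eq_one_add_inr, Fintype.card_eq_nat_card]
    exact natCard_coAd_orbit hunit hglam
end

section
/- Let D ⊆ Δₙ = {εᵢ − εⱼ | 1 ≤ i < j ≤ n} be a closed set of positive roots (i.e., α, β ∈ D and α + β ∈ Δₙ imply α + β ∈ D). Let D^♯ be the set of roots of D expressible as a sum of two roots of D, and let g_D ⊆ gl_n be the span of the matrix units E_{ij} for εᵢ − εⱼ ∈ D. Then [g_D, g_D] = g_{D^♯}, where the bracket is the span of all commutators XY − YX with X, Y ∈ g_D. -/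
/-! A product of matrices supported on `S` and on `T` is supported on `S ○ T`, which gives
`[g_D, g_D] ⊆ g_{D♯}`. Conversely, if `(i, j), (j, k) ∈ D` then `k ≠ i` because `D` consists of
positive roots, so `E_jk E_ij = 0` and `E_ik = [E_ij, E_jk]`. -/

open SetRel

namespace Matrix

variable {l m n R : Type*}

section Semiring

variable [Semiring R]

variable (R) in
def supportedOn (S : SetRel m n) : Submodule R (Matrix m n R) where
  carrier := {M | ∀ i j, (i, j) ∉ S → M i j = 0}
  add_mem' hM hN i j h := by simp [hM i j h, hN i j h]
  zero_mem' _ _ _ := rfl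
  smul_mem' c M hM i j h := by simp [hM i j h]

@[simp]
theorem mem_supportedOn {S : SetRel m n} {M : Matrix m n R} :
    M ∈ supportedOn R S ↔ ∀ i j, (i, j) ∉ S → M i j = 0 :=
  .rfl

variable [DecidableEq m] [DecidableEq n]

theorem single_mem_supportedOn {S : SetRel m n} {i : m} {j : n} (h : (i, j) ∈ S) (c : R) :
    single i j c ∈ supportedOn R S := by
  intro a b hab
  refine single_apply_of_ne _ _ _ _ _ ?_
  rintro ⟨rfl, rfl⟩
  exact hab h

theorem supportedOn_le_of_single_mem [Fintype m] [Fintype n] {S : SetRel m n}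
    {P : Submodule R (Matrix m n R)} (hP : ∀ i j, (i, j) ∈ S → ∀ c : R, single i j c ∈ P) :
    supportedOn R S ≤ P := by
  intro M hM
  rw [matrix_eq_sum_single M]
  refine Submodule.sum_mem _ fun i _ => Submodule.sum_mem _ fun j _ => ?_
  by_cases h : (i, j) ∈ S
  · exact hP i j h _
  · rw [hM i j h, single_zero]
    exact P.zero_mem

end Semiring

theorem mul_mem_supportedOn_comp [Semiring R] [Fintype m] {S : SetRel l m} {T : SetRel m n}
    {X : Matrix l m R} {Y : Matrix m n R} (hX : X ∈ supportedOn R S) (hY : Y ∈ supportedOn R T) :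
    X * Y ∈ supportedOn R (S ○ T) := by
  intro i k hik
  refine Finset.sum_eq_zero fun j _ => ?_
  by_cases hij : (i, j) ∈ S
  · simp [hY j k fun hjk => hik ⟨j, hij, hjk⟩]
  · simp [hX i j hij]

theorem single_eq_commutator [Ring R] [DecidableEq n] [Fintype n] {i j k : n} (hki : k ≠ i)
    (c : R) :
    single i k c = single i j c * single j k 1 - single j k 1 * single i j c := by
  rw [single_mul_single_same, single_mul_single_of_ne _ j k i hki, mul_one, sub_zero]

theorem span_commutators_supportedOn [Ring R] [DecidableEq n] [Fintype n] {S : SetRel n n}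
    (hS : ∀ i j, (i, j) ∈ S → (j, i) ∉ S) :
    Submodule.span R {M : Matrix n n R |
        ∃ X ∈ supportedOn R S, ∃ Y ∈ supportedOn R S, M = X * Y - Y * X} =
      supportedOn R (S ○ S) := by
  apply le_antisymm
  · rw [Submodule.span_le]
    rintro _ ⟨X, hX, Y, hY, rfl⟩
    exact sub_mem (mul_mem_supportedOn_comp hX hY) (mul_mem_supportedOn_comp hY hX)
  · refine supportedOn_le_of_single_mem fun i k ⟨j, hij, hjk⟩ c => Submodule.subset_span ?_
    have hki : k ≠ i := by
      rintro rfl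
      exact hS _ _ hij hjk
    exact ⟨_, single_mem_supportedOn hij c, _, single_mem_supportedOn hjk 1,
      single_eq_commutator hki c⟩

end Matrix

theorem stmt9_general {F : Type*} [Field F] (n : ℕ) (D : Set (Fin n × Fin n))
    (hDpos : ∀ p ∈ D, p.1 < p.2)
    (gD : Submodule F (Matrix (Fin n) (Fin n) F))
    (hgD : ∀ M : Matrix (Fin n) (Fin n) F, M ∈ gD ↔ ∀ i j : Fin n, (i, j) ∉ D → M i j = 0)
    (gSharp : Submodule F (Matrix (Fin n) (Fin n) F))
    (hgSharp : ∀ M : Matrix (Fin n) (Fin n) F, M ∈ gSharp ↔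
      ∀ i k : Fin n, ¬ (∃ j : Fin n, (i, j) ∈ D ∧ (j, k) ∈ D) → M i k = 0) :
    Submodule.span F {M : Matrix (Fin n) (Fin n) F |
        ∃ X ∈ gD, ∃ Y ∈ gD, M = X * Y - Y * X} = gSharp := by
  obtain rfl : gD = Matrix.supportedOn F D := SetLike.ext hgD
  obtain rfl : gSharp = Matrix.supportedOn F (D ○ D) := SetLike.ext hgSharp
  exact Matrix.span_commutators_supportedOn fun i j hij hji =>
    (hDpos _ hij).asymm (hDpos _ hji)

/-- For a closed set `D` of positive roots (positions `(i,j)`, `i < j`) and `g_D` the span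
of the corresponding matrix units, `[g_D, g_D] = g_{D♯}`, where `D♯` is the set of roots
of `D` expressible as a sum of two roots of `D`. -/
theorem stmt9 {F : Type*} [Field F] (n : ℕ) (D : Set (Fin n × Fin n))
    (hDpos : ∀ p ∈ D, p.1 < p.2)
    (hDclosed : ∀ i j k : Fin n, (i, j) ∈ D → (j, k) ∈ D → (i, k) ∈ D)
    (gD : Submodule F (Matrix (Fin n) (Fin n) F))
    (hgD : ∀ M : Matrix (Fin n) (Fin n) F, M ∈ gD ↔ ∀ i j : Fin n, (i, j) ∉ D → M i j = 0)
    (gSharp : Submodule F (Matrix (Fin n) (Fin n) F))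
    (hgSharp : ∀ M : Matrix (Fin n) (Fin n) F, M ∈ gSharp ↔
      ∀ i k : Fin n, ¬ (∃ j : Fin n, (i, j) ∈ D ∧ (j, k) ∈ D) → M i k = 0) :
    Submodule.span F {M : Matrix (Fin n) (Fin n) F |
        ∃ X ∈ gD, ∃ Y ∈ gD, M = X * Y - Y * X} = gSharp :=
  stmt9_general n D hDpos gD hgD gSharp hgSharp
end

section
/- Let D ⊆ {(i,j) | 1 ≤ i < j ≤ n} be a closed set (if (i,j), (j,k) ∈ D then (i,k) ∈ D), g_D the span of matrix units E_{ij} for (i,j) ∈ D, and T a matrix supported on positions (j,i) with (i,j) ∈ D. The function ψ_T(g) = ψ(tr(T(g − I))) on the group G_D generated by the root subgroups {I + ξE_{ij} | (i,j) ∈ D} is a group homomorphism to ℂ× if and only if tr(T·X·Y) = 0 for all X, Y ∈ g_D, where ψ : F_q → ℂ× is a fixed nontrivial additive character. -/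
open Matrix

/-!
Writing `g = 1 + X` and `h = 1 + Y` gives `gh - 1 = X + Y + XY`, so `ψ_T` is multiplicative on
`(g, h)` exactly when `ψ(tr(T X Y)) = 1`. Since `X ↦ tr(T X Y)` is `F`-linear and `g_D` is a
subspace, replacing `X` by `c • X` turns this into `ψ(c · tr(T X Y)) = 1` for every `c`, which
forces `tr(T X Y) = 0` because a nontrivial additive character of a field is primitive.
-/

lemma AddChar.map_add_add_eq_mul_iff {A M : Type*} [AddGroup A] [Monoid M] (ψ : AddChar A M)
    (a b c : A) : ψ (a + b + c) = ψ a * ψ b ↔ ψ c = 1 := by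
  rw [map_add_eq_mul ψ (a + b) c, ← map_add_eq_mul ψ a b, (ψ.val_isUnit _).mul_eq_left]

lemma AddChar.eq_zero_of_forall_map_mul_eq_one {F M : Type*} [Field F] [CommMonoid M]
    {ψ : AddChar F M} (hψ : ψ ≠ 1) {a : F} (h : ∀ c, ψ (a * c) = 1) : a = 0 := by
  by_contra ha
  exact IsPrimitive.of_ne_one hψ ha (eq_one_iff.mpr h)

lemma mul_sub_one_eq_add_add_mul {R : Type*} [Ring R] (g h : R) :
    g * h - 1 = (g - 1) + (h - 1) + (g - 1) * (h - 1) := by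
  noncomm_ring

lemma Matrix.trace_mul_mul_sub_one {ι R : Type*} [Fintype ι] [DecidableEq ι] [CommRing R]
    (T g h : Matrix ι ι R) :
    trace (T * (g * h - 1)) =
      trace (T * (g - 1)) + trace (T * (h - 1)) + trace (T * ((g - 1) * (h - 1))) := by
  rw [mul_sub_one_eq_add_add_mul, mul_add, mul_add, trace_add, trace_add]

theorem stmt10_general {F : Type*} [Field F] (n : ℕ)
    (gD : Submodule F (Matrix (Fin n) (Fin n) F))
    (T : Matrix (Fin n) (Fin n) F)
    (ψ : AddChar F ℂ) (hψ : ∃ x : F, ψ x ≠ 1) :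
    (∀ g h : Matrix (Fin n) (Fin n) F, g - 1 ∈ gD → h - 1 ∈ gD →
        ψ (trace (T * (g * h - 1))) = ψ (trace (T * (g - 1))) * ψ (trace (T * (h - 1))))
      ↔ (∀ X ∈ gD, ∀ Y ∈ gD, trace (T * (X * Y)) = 0) := by
  constructor
  · intro hhom X hX Y hY
    refine AddChar.eq_zero_of_forall_map_mul_eq_one (AddChar.ne_one_iff.mpr hψ) fun c => ?_
    have hg : (1 + c • X) - 1 ∈ gD := by simpa using gD.smul_mem c hX
    have hh : (1 + Y) - 1 ∈ gD := by simpa using hY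
    have hmul := hhom _ _ hg hh
    rw [trace_mul_mul_sub_one, ψ.map_add_add_eq_mul_iff] at hmul
    simpa [Matrix.mul_smul, trace_smul, mul_comm c] using hmul
  · intro hvanish g h hg hh
    rw [trace_mul_mul_sub_one, hvanish _ hg _ hh, add_zero, AddChar.map_add_eq_mul]

/-- For a pattern group `G_D = I + g_D` over `F_q` and `T` supported on the transposed
positions of `D`, the function `ψ_T(g) = ψ(tr(T(g − I)))` is a homomorphism on `G_D`
if and only if `tr(T·X·Y) = 0` for all `X, Y ∈ g_D`. -/
theorem stmt10 {F : Type*} [Field F] [Fintype F] (n : ℕ) (D : Set (Fin n × Fin n))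
    (hDpos : ∀ p ∈ D, p.1 < p.2)
    (hDclosed : ∀ i j k : Fin n, (i, j) ∈ D → (j, k) ∈ D → (i, k) ∈ D)
    (gD : Submodule F (Matrix (Fin n) (Fin n) F))
    (hgD : ∀ M : Matrix (Fin n) (Fin n) F, M ∈ gD ↔ ∀ i j : Fin n, (i, j) ∉ D → M i j = 0)
    (T : Matrix (Fin n) (Fin n) F)
    (hT : ∀ i j : Fin n, (j, i) ∉ D → T i j = 0)
    (ψ : AddChar F ℂ) (hψ : ∃ x : F, ψ x ≠ 1) :
    (∀ g h : Matrix (Fin n) (Fin n) F, g - 1 ∈ gD → h - 1 ∈ gD →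
        ψ (trace (T * (g * h - 1))) = ψ (trace (T * (g - 1))) * ψ (trace (T * (h - 1))))
      ↔ (∀ X ∈ gD, ∀ Y ∈ gD, trace (T * (X * Y)) = 0) :=
  stmt10_general n gD T ψ hψ
end

section
/- Let n = n₁ + n₂ + n₃ + n₄ and let g be the block strictly upper-triangular matrices with block sizes (n₁,n₂,n₃,n₄) over F_q, with gᵗ its set of transposes (block strictly lower-triangular). Fix T ∈ gᵗ with blocks T₃₁, T₄₁, T₄₂ (and T₂₁ = T₃₂ = T₄₃ arbitrary). Let b_T = {Y ∈ g | Y₂₃T₃₁ = 0, T₄₂Y₂₃ = 0, T₄₁Y₁₂ = 0, Y₃₄T₄₁ = 0}. Then b_T is a subalgebra of g (closed under matrix multiplication) and tr(T·X·Y) = 0 for all X, Y ∈ b_T. -/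
open Matrix

/-- Block index for the decomposition `n = n₁ + n₂ + n₃ + n₄`. -/
def blk (n₁ n₂ n₃ n₄ : ℕ) (i : Fin (n₁ + n₂ + n₃ + n₄)) : Fin 4 :=
  if (i : ℕ) < n₁ then 0 else if (i : ℕ) < n₁ + n₂ then 1
  else if (i : ℕ) < n₁ + n₂ + n₃ then 2 else 3

private lemma ite_sum' {α β : Type*} [AddCommMonoid β] {c : Prop} [Decidable c]
    (s : Finset α) (f : α → β) :
    (∑ x ∈ s, if c then f x else 0) = if c then ∑ x ∈ s, f x else 0 := by
  split <;> simp

/-- For `g` the block strictly upper-triangular matrices, `T ∈ gᵗ`, and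
`b_T = {Y ∈ g | Y₂₃T₃₁ = 0, T₄₂Y₂₃ = 0, T₄₁Y₁₂ = 0, Y₃₄T₄₁ = 0}`,
the set `b_T` is closed under matrix multiplication and `tr(T·X·Y) = 0` for all
`X, Y ∈ b_T`. -/
theorem stmt13 {F : Type*} [Field F] [Fintype F] (n₁ n₂ n₃ n₄ : ℕ)
    (T : Matrix (Fin (n₁ + n₂ + n₃ + n₄)) (Fin (n₁ + n₂ + n₃ + n₄)) F)
    (hT : ∀ i j, ¬ blk n₁ n₂ n₃ n₄ j < blk n₁ n₂ n₃ n₄ i → T i j = 0)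
    (bT : Set (Matrix (Fin (n₁ + n₂ + n₃ + n₄)) (Fin (n₁ + n₂ + n₃ + n₄)) F))
    (hbT : ∀ Y, Y ∈ bT ↔
      (∀ i j, ¬ blk n₁ n₂ n₃ n₄ i < blk n₁ n₂ n₃ n₄ j → Y i j = 0) ∧
      -- Y₂₃ T₃₁ = 0
      (∀ i j, blk n₁ n₂ n₃ n₄ i = 1 → blk n₁ n₂ n₃ n₄ j = 0 →
        ∑ k ∈ Finset.univ.filter (fun k => blk n₁ n₂ n₃ n₄ k = 2), Y i k * T k j = 0) ∧
      -- T₄₂ Y₂₃ = 0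
      (∀ i j, blk n₁ n₂ n₃ n₄ i = 3 → blk n₁ n₂ n₃ n₄ j = 2 →
        ∑ k ∈ Finset.univ.filter (fun k => blk n₁ n₂ n₃ n₄ k = 1), T i k * Y k j = 0) ∧
      -- T₄₁ Y₁₂ = 0
      (∀ i j, blk n₁ n₂ n₃ n₄ i = 3 → blk n₁ n₂ n₃ n₄ j = 1 →
        ∑ k ∈ Finset.univ.filter (fun k => blk n₁ n₂ n₃ n₄ k = 0), T i k * Y k j = 0) ∧
      -- Y₃₄ T₄₁ = 0
      (∀ i j, blk n₁ n₂ n₃ n₄ i = 2 → blk n₁ n₂ n₃ n₄ j = 0 →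
        ∑ k ∈ Finset.univ.filter (fun k => blk n₁ n₂ n₃ n₄ k = 3), Y i k * T k j = 0)) :
    (∀ X ∈ bT, ∀ Y ∈ bT, X * Y ∈ bT) ∧
    (∀ X ∈ bT, ∀ Y ∈ bT, trace (T * (X * Y)) = 0) := by
  set b := blk n₁ n₂ n₃ n₄ with hb
  have e0 : ∀ u : Fin 4, u = 0 ↔ (u : ℕ) = 0 := by decide
  have e1 : ∀ u : Fin 4, u = 1 ↔ (u : ℕ) = 1 := by decide
  have e2 : ∀ u : Fin 4, u = 2 ↔ (u : ℕ) = 2 := by decide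
  have e3 : ∀ u : Fin 4, u = 3 ↔ (u : ℕ) = 3 := by decide
  constructor
  · -- closure under multiplication
    intro X hX Y hY
    obtain ⟨hXu, -, -, -, -⟩ := (hbT X).1 hX
    obtain ⟨hYu, -, -, -, -⟩ := (hbT Y).1 hY
    have hZ : ∀ i j, ((b j : ℕ)) ≤ (b i : ℕ) + 1 → (X * Y) i j = 0 := by
      intro i j hij
      rw [Matrix.mul_apply]
      apply Finset.sum_eq_zero
      intro k _
      by_cases h1 : b i < b k
      · have h2 : ¬ b k < b j := by
          rw [Fin.lt_def] at h1 ⊢; omega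
        rw [hYu _ _ h2, mul_zero]
      · rw [hXu _ _ h1, zero_mul]
    rw [hbT]
    refine ⟨?_, ?_, ?_, ?_, ?_⟩
    · intro i j hij
      rw [Matrix.mul_apply]
      apply Finset.sum_eq_zero
      intro k _
      by_cases h1 : b i < b k
      · have h2 : ¬ b k < b j := fun h => hij (h1.trans h)
        rw [hYu _ _ h2, mul_zero]
      · rw [hXu _ _ h1, zero_mul]
    · intro i j hi hj
      apply Finset.sum_eq_zero
      intro k hk
      have hk' : b k = 2 := (Finset.mem_filter.mp hk).2
      rw [hZ i k (by rw [hk', hi]; decide), zero_mul]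
    · intro i j hi hj
      apply Finset.sum_eq_zero
      intro k hk
      have hk' : b k = 1 := (Finset.mem_filter.mp hk).2
      rw [hZ k j (by rw [hk', hj]; decide), mul_zero]
    · intro i j hi hj
      apply Finset.sum_eq_zero
      intro k hk
      have hk' : b k = 0 := (Finset.mem_filter.mp hk).2
      rw [hZ k j (by rw [hk', hj]; decide), mul_zero]
    · intro i j hi hj
      apply Finset.sum_eq_zero
      intro k hk
      have hk' : b k = 3 := (Finset.mem_filter.mp hk).2
      rw [hZ i k (by rw [hk', hi]; decide), zero_mul]
  · -- trace vanishes
    intro X hX Y hY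
    obtain ⟨hXu, hX2, hX3, hX4, hX5⟩ := (hbT X).1 hX
    obtain ⟨hYu, hY2, hY3, hY4, hY5⟩ := (hbT Y).1 hY
    have hpt : ∀ i j k, T i j * (X j k * Y k i) =
        (if b i = 2 then if b j = 0 then if b k = 1 then T i j * (X j k * Y k i) else 0 else 0 else 0)
      + (if b i = 3 then if b j = 1 then if b k = 2 then T i j * (X j k * Y k i) else 0 else 0 else 0)
      + (if b i = 3 then if b j = 0 then if b k = 1 then T i j * (X j k * Y k i) else 0 else 0 else 0)
      + (if b i = 3 then if b j = 0 then if b k = 2 then T i j * (X j k * Y k i) else 0 else 0 else 0) := by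
      intro i j k
      by_cases hjk : b j < b k
      · by_cases hki : b k < b i
        · have hi4 := (b i).isLt
          have hj4 := (b j).isLt
          have hk4 := (b k).isLt
          rw [Fin.lt_def] at hjk hki
          have hc : ((b j : ℕ) = 0 ∧ (b k : ℕ) = 1 ∧ (b i : ℕ) = 2)
              ∨ ((b j : ℕ) = 1 ∧ (b k : ℕ) = 2 ∧ (b i : ℕ) = 3)
              ∨ ((b j : ℕ) = 0 ∧ (b k : ℕ) = 1 ∧ (b i : ℕ) = 3)
              ∨ ((b j : ℕ) = 0 ∧ (b k : ℕ) = 2 ∧ (b i : ℕ) = 3) := by omega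
          rcases hc with ⟨h1, h2, h3⟩ | ⟨h1, h2, h3⟩ | ⟨h1, h2, h3⟩ | ⟨h1, h2, h3⟩ <;>
            simp [e0, e1, e2, e3, h1, h2, h3]
        · simp [hYu k i hki]
      · simp [hXu j k hjk]
    have c1 : (∑ i ∈ Finset.univ.filter (fun k => b k = 2),
        ∑ j ∈ Finset.univ.filter (fun k => b k = 0),
        ∑ k ∈ Finset.univ.filter (fun k => b k = 1), T i j * (X j k * Y k i)) = 0 := by
      rw [Finset.sum_comm]
      apply Finset.sum_eq_zero
      intro j hj
      rw [Finset.sum_comm]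
      apply Finset.sum_eq_zero
      intro k hk
      have h := hY2 k j (Finset.mem_filter.mp hk).2 (Finset.mem_filter.mp hj).2
      calc ∑ i ∈ Finset.univ.filter (fun k => b k = 2), T i j * (X j k * Y k i)
          = X j k * ∑ i ∈ Finset.univ.filter (fun k => b k = 2), Y k i * T i j := by
            rw [Finset.mul_sum]; exact Finset.sum_congr rfl fun i _ => by ring
        _ = 0 := by rw [h, mul_zero]
    have c2 : (∑ i ∈ Finset.univ.filter (fun k => b k = 3),
        ∑ j ∈ Finset.univ.filter (fun k => b k = 1),
        ∑ k ∈ Finset.univ.filter (fun k => b k = 2), T i j * (X j k * Y k i)) = 0 := by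
      apply Finset.sum_eq_zero
      intro i hi
      rw [Finset.sum_comm]
      apply Finset.sum_eq_zero
      intro k hk
      have h := hX3 i k (Finset.mem_filter.mp hi).2 (Finset.mem_filter.mp hk).2
      calc ∑ j ∈ Finset.univ.filter (fun k => b k = 1), T i j * (X j k * Y k i)
          = (∑ j ∈ Finset.univ.filter (fun k => b k = 1), T i j * X j k) * Y k i := by
            rw [Finset.sum_mul]; exact Finset.sum_congr rfl fun jj _ => by ring
        _ = 0 := by rw [h, zero_mul]
    have c3 : (∑ i ∈ Finset.univ.filter (fun k => b k = 3),
        ∑ j ∈ Finset.univ.filter (fun k => b k = 0),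
        ∑ k ∈ Finset.univ.filter (fun k => b k = 1), T i j * (X j k * Y k i)) = 0 := by
      apply Finset.sum_eq_zero
      intro i hi
      rw [Finset.sum_comm]
      apply Finset.sum_eq_zero
      intro k hk
      have h := hX4 i k (Finset.mem_filter.mp hi).2 (Finset.mem_filter.mp hk).2
      calc ∑ j ∈ Finset.univ.filter (fun k => b k = 0), T i j * (X j k * Y k i)
          = (∑ j ∈ Finset.univ.filter (fun k => b k = 0), T i j * X j k) * Y k i := by
            rw [Finset.sum_mul]; exact Finset.sum_congr rfl fun jj _ => by ring
        _ = 0 := by rw [h, zero_mul]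
    have c4 : (∑ i ∈ Finset.univ.filter (fun k => b k = 3),
        ∑ j ∈ Finset.univ.filter (fun k => b k = 0),
        ∑ k ∈ Finset.univ.filter (fun k => b k = 2), T i j * (X j k * Y k i)) = 0 := by
      rw [Finset.sum_comm]
      apply Finset.sum_eq_zero
      intro j hj
      rw [Finset.sum_comm]
      apply Finset.sum_eq_zero
      intro k hk
      have h := hY5 k j (Finset.mem_filter.mp hk).2 (Finset.mem_filter.mp hj).2
      calc ∑ i ∈ Finset.univ.filter (fun k => b k = 3), T i j * (X j k * Y k i)
          = X j k * ∑ i ∈ Finset.univ.filter (fun k => b k = 3), Y k i * T i j := by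
            rw [Finset.mul_sum]; exact Finset.sum_congr rfl fun i _ => by ring
        _ = 0 := by rw [h, mul_zero]
    have expand : trace (T * (X * Y)) = ∑ i, ∑ j, ∑ k, T i j * (X j k * Y k i) := by
      simp only [Matrix.trace, Matrix.diag_apply, Matrix.mul_apply, Finset.mul_sum]
    rw [expand]
    calc (∑ i, ∑ j, ∑ k, T i j * (X j k * Y k i))
        = ∑ i, ∑ j, ∑ k,
          ((if b i = 2 then if b j = 0 then if b k = 1 then T i j * (X j k * Y k i) else 0 else 0 else 0)
          + (if b i = 3 then if b j = 1 then if b k = 2 then T i j * (X j k * Y k i) else 0 else 0 else 0)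
          + (if b i = 3 then if b j = 0 then if b k = 1 then T i j * (X j k * Y k i) else 0 else 0 else 0)
          + (if b i = 3 then if b j = 0 then if b k = 2 then T i j * (X j k * Y k i) else 0 else 0 else 0)) := by
          exact Finset.sum_congr rfl fun i _ => Finset.sum_congr rfl fun j _ =>
            Finset.sum_congr rfl fun k _ => hpt i j k
      _ = 0 := by
          simp only [Finset.sum_add_distrib, ite_sum', ← Finset.sum_filter]
          rw [c1, c2, c3, c4]
          norm_num
end

section
/- Let g be the full strictly upper-triangular n × n matrices over F_q and T ∈ gᵗ a monomial matrix (at most one nonzero entry in each row and each column). Suppose T has exactly one nonzero entry, at position (t, s) with s < t. Then the codimension of the stabilizer g^T = {X ∈ g | tr(T(XY − YX)) = 0 for all Y ∈ g} in g equals 2·|{r | s < r < t}| = 2(t − s − 1). -/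
/-!
Through `λ_T`, the condition on `X ∈ g` reads `(XY - YX)_{st} = 0` for all `Y ∈ g`, and for
strictly upper-triangular matrices `(XY - YX)_{st} = ∑_{s<r<t} (X_{sr} Y_{rt} - Y_{sr} X_{rt})`.
Testing `Y = E_{rt}` and `Y = E_{sr}` shows that this is exactly the vanishing of the entries
`X_{sr}` and `X_{rt}`, `s < r < t`. Hence `g^T` is the coordinate subspace of `g` obtained by
removing these `2(t - s - 1)` "hook" positions.
-/

open Matrix Module

namespace Matrix

open Finset

theorem finrank_submodule_eq_card_of_mem_iff {m n R : Type*} [Fintype m] [Fintype n] [Ring R]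
    [StrongRankCondition R] (W : Submodule R (Matrix m n R)) (S : Finset (m × n))
    (hW : ∀ M, M ∈ W ↔ ∀ i j, (i, j) ∉ S → M i j = 0) :
    finrank R W = #S := by
  classical
  let e : W ≃ₗ[R] (S → R) :=
    { toFun := fun M p => (M : Matrix m n R) p.1.1 p.1.2
      map_add' := fun _ _ => rfl
      map_smul' := fun _ _ => rfl
      invFun := fun f => ⟨of fun i j => if h : (i, j) ∈ S then f ⟨(i, j), h⟩ else 0,
        (hW _).mpr fun i j h => by simp [h]⟩
      left_inv := fun M => by
        ext i j
        by_cases h : (i, j) ∈ S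
        · simp [h]
        · simp [h, (hW _).mp M.2 i j h]
      right_inv := fun f => by
        ext ⟨⟨i, j⟩, h⟩
        simp [h] }
  rw [e.finrank_eq, finrank_fintype_fun_eq_card, Fintype.card_coe]

variable {ι R : Type*} [LinearOrder ι]

def IsStrictUpperTriangular [Zero R] (M : Matrix ι ι R) : Prop :=
  ∀ i j, j ≤ i → M i j = 0

theorem IsStrictUpperTriangular.single [Zero R] {i j : ι} (hij : i < j) (a : R) :
    (single i j a).IsStrictUpperTriangular := by
  intro i' j' hji'
  rw [Matrix.single_apply_of_ne]
  rintro ⟨rfl, rfl⟩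
  exact hji'.not_gt hij

section

variable [LocallyFiniteOrder ι]

def hook (s t : ι) : Finset (ι × ι) :=
  (Ioo s t).image (s, ·) ∪ (Ioo s t).image (·, t)

theorem card_hook (s t : ι) : #(hook s t) = 2 * #(Ioo s t) := by
  rw [hook, card_union_of_disjoint, card_image_of_injective _ (Prod.mk_right_injective s),
    card_image_of_injective _ (Prod.mk_left_injective t), two_mul]
  simp only [disjoint_left, mem_image, mem_Ioo, not_exists, not_and]
  rintro _ ⟨r, ⟨-, hrt⟩, rfl⟩ r' - h
  exact hrt.ne (Prod.ext_iff.mp h).2.symm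

theorem forall_hook_iff [Zero R] {X : Matrix ι ι R} {s t : ι} :
    (∀ p ∈ hook s t, X p.1 p.2 = 0) ↔ ∀ r ∈ Ioo s t, X s r = 0 ∧ X r t = 0 := by
  simp only [hook, mem_union, mem_image, or_imp, forall_and, forall_exists_index, and_imp,
    forall_apply_eq_imp_iff₂]

end

variable [Fintype ι]

variable (ι) in
def strictUpperPositions : Finset (ι × ι) :=
  {p | p.1 < p.2}

theorem isStrictUpperTriangular_iff [Zero R] {M : Matrix ι ι R} :
    M.IsStrictUpperTriangular ↔ ∀ i j, (i, j) ∉ strictUpperPositions ι → M i j = 0 := by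
  simp [IsStrictUpperTriangular, strictUpperPositions]

variable [LocallyFiniteOrder ι]

theorem hook_subset_strictUpperPositions (s t : ι) : hook s t ⊆ strictUpperPositions ι := by
  intro p
  simp only [hook, strictUpperPositions, mem_union, mem_image, mem_Ioo, mem_filter, mem_univ,
    true_and]
  rintro (⟨r, ⟨hsr, -⟩, rfl⟩ | ⟨r, ⟨-, hrt⟩, rfl⟩)
  exacts [hsr, hrt]

theorem IsStrictUpperTriangular.mul_apply [NonUnitalNonAssocSemiring R] {X Y : Matrix ι ι R}
    (hX : X.IsStrictUpperTriangular) (hY : Y.IsStrictUpperTriangular) (i j : ι) :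
    (X * Y) i j = ∑ k ∈ Ioo i j, X i k * Y k j := by
  rw [Matrix.mul_apply, eq_comm]
  refine sum_subset (subset_univ _) fun k _ hk => ?_
  rcases le_or_gt k i with hki | hik
  · rw [hX i k hki, zero_mul]
  · rw [hY k j (not_lt.mp fun hkj => hk (mem_Ioo.mpr ⟨hik, hkj⟩)), mul_zero]

theorem IsStrictUpperTriangular.forall_commutator_apply_eq_zero_iff [Ring R]
    {X : Matrix ι ι R} (hX : X.IsStrictUpperTriangular) (s t : ι) :
    (∀ Y : Matrix ι ι R, Y.IsStrictUpperTriangular → (X * Y - Y * X) s t = 0) ↔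
      ∀ r ∈ Ioo s t, X s r = 0 ∧ X r t = 0 := by
  constructor
  · intro h r hr
    obtain ⟨hsr, hrt⟩ := mem_Ioo.mp hr
    constructor
    · simpa [single_mul_apply_of_ne _ _ _ _ _ hsr.ne] using h _ (.single hrt 1)
    · simpa [mul_single_apply_of_ne _ _ _ _ _ hrt.ne'] using h _ (.single hsr 1)
  · intro h Y hY
    rw [sub_apply, hX.mul_apply hY, hY.mul_apply hX, sum_eq_zero, sum_eq_zero, sub_zero]
    · exact fun r hr => by rw [(h r hr).2, mul_zero]
    · exact fun r hr => by rw [(h r hr).1, zero_mul]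

theorem isStrictUpperTriangular_and_vanish_on_hook_iff [Zero R] {X : Matrix ι ι R} {s t : ι} :
    (X.IsStrictUpperTriangular ∧ ∀ r ∈ Ioo s t, X s r = 0 ∧ X r t = 0) ↔
      ∀ i j, (i, j) ∉ strictUpperPositions ι \ hook s t → X i j = 0 := by
  rw [isStrictUpperTriangular_iff, ← forall_hook_iff]
  simp only [mem_sdiff, not_and_or, not_not, or_imp, forall_and, Prod.forall]

theorem mem_stabilizer_single_iff [Ring R] [NoZeroDivisors R] {c : R} (hc : c ≠ 0) {s t : ι}
    (X : Matrix ι ι R) :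
    (X.IsStrictUpperTriangular ∧ ∀ Y : Matrix ι ι R, Y.IsStrictUpperTriangular →
        trace (single t s c * (X * Y - Y * X)) = 0) ↔
      ∀ i j, (i, j) ∉ strictUpperPositions ι \ hook s t → X i j = 0 := by
  simp only [trace_single_mul, smul_eq_mul, mul_eq_zero, hc, false_or]
  rw [← isStrictUpperTriangular_and_vanish_on_hook_iff]
  exact and_congr_right fun hX => hX.forall_commutator_apply_eq_zero_iff s t

end Matrix

open Finset in
theorem stmt15_general {F : Type*} [Field F] (n : ℕ) (s t : Fin n)
    (c : F) (hc : c ≠ 0)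
    (T : Matrix (Fin n) (Fin n) F) (hTdef : T = Matrix.single t s c)
    (g : Submodule F (Matrix (Fin n) (Fin n) F))
    (hg : ∀ M : Matrix (Fin n) (Fin n) F, M ∈ g ↔ ∀ i j : Fin n, j ≤ i → M i j = 0)
    (gT : Submodule F (Matrix (Fin n) (Fin n) F))
    (hgT : ∀ X : Matrix (Fin n) (Fin n) F,
      X ∈ gT ↔ X ∈ g ∧ ∀ Y ∈ g, trace (T * (X * Y - Y * X)) = 0) :
    finrank F g - finrank F gT = 2 * ((t : ℕ) - (s : ℕ) - 1) := by
  have hg' (M : Matrix (Fin n) (Fin n) F) :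
      M ∈ g ↔ ∀ i j, (i, j) ∉ strictUpperPositions (Fin n) → M i j = 0 :=
    (hg M).trans isStrictUpperTriangular_iff
  have hgT' (X : Matrix (Fin n) (Fin n) F) :
      X ∈ gT ↔ ∀ i j, (i, j) ∉ strictUpperPositions (Fin n) \ hook s t → X i j = 0 := by
    simp only [hgT, hg, hTdef]
    exact mem_stabilizer_single_iff hc X
  have hsub := hook_subset_strictUpperPositions s t
  rw [finrank_submodule_eq_card_of_mem_iff g _ hg',
    finrank_submodule_eq_card_of_mem_iff gT _ hgT', card_sdiff_of_subset hsub, Nat.sub_sub_self (card_le_card hsub), card_hook, Fin.card_Ioo]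

/-- For `g` the strictly upper-triangular `n × n` matrices over `F_q` and
`T = c·E_{ts}` (`c ≠ 0`, `s < t`) a monomial matrix with a single nonzero entry, the
codimension in `g` of the stabilizer `g^T = {X ∈ g | tr(T(XY − YX)) = 0 ∀ Y ∈ g}`
equals `2(t − s − 1)`. -/
theorem stmt15 {F : Type*} [Field F] [Fintype F] (n : ℕ) (s t : Fin n) (hst : s < t)
    (c : F) (hc : c ≠ 0)
    (T : Matrix (Fin n) (Fin n) F) (hTdef : T = Matrix.single t s c)
    (g : Submodule F (Matrix (Fin n) (Fin n) F))
    (hg : ∀ M : Matrix (Fin n) (Fin n) F, M ∈ g ↔ ∀ i j : Fin n, j ≤ i → M i j = 0)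
    (gT : Submodule F (Matrix (Fin n) (Fin n) F))
    (hgT : ∀ X : Matrix (Fin n) (Fin n) F,
      X ∈ gT ↔ X ∈ g ∧ ∀ Y ∈ g, trace (T * (X * Y - Y * X)) = 0) :
    finrank F g - finrank F gT = 2 * ((t : ℕ) - (s : ℕ) - 1) :=
  stmt15_general n s t c hc T hTdef g hg gT hgT
end

section
/- Let G be a finite group that is a semidirect product M ⋉ N with N abelian normal, let χ be a (1-dimensional) character of N, R_χ = {m ∈ M | χ(m⁻¹nm) = χ(n) for all n ∈ N} its stabilizer in M, and π an irreducible representation of R_χ. Then the induced representation Ind_{R_χ ⋉ N}^G (π ⊗ χ) is irreducible. -/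
/-!
Let `U` be a nonzero `G`-invariant subspace of the induced space. After a translation, `U`
contains some `f` with `f 1 ≠ 0`. Averaging the right translates of `f` by `n ∈ N` against
`χ(n)⁻¹` multiplies the value at `x` by the sum over `N` of the character
`n ↦ χ(n)⁻¹ χ(φ_{x.right} n)`, which vanishes unless `x.right` stabilises `χ`, i.e. unless
`x ∈ H`. The result is a function in `U` supported on `H`, hence determined by its nonzero
value at `1`. So the values at `1` of the functions in `U` supported on `H` form a nonzero
`π`-invariant subspace of `V`, which is all of `V`; and every function in the induced space
is a sum of translates of functions supported on `H`.
-/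

/-- A representation is irreducible if the space is nonzero and the only invariant
subspaces are `⊥` and `⊤`. -/
def IsIrreducibleRep {k G W : Type*} [Field k] [Group G] [AddCommGroup W] [Module k W]
    (σ : Representation k G W) : Prop :=
  (∃ w : W, w ≠ 0) ∧
    ∀ U : Submodule k W, (∀ (g : G), ∀ w ∈ U, σ g w ∈ U) → U = ⊥ ∨ U = ⊤

/-- The space of the representation induced from a representation `ρ` of a subgroup `H`
of `G`: functions `f : G → V` with `f(hg) = ρ(h)(f g)`. -/
def IndSpace {k G V : Type*} [Field k] [Group G] [AddCommGroup V] [Module k V]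
    (H : Subgroup G) (ρ : Representation k H V) : Submodule k (G → V) where
  carrier := {f | ∀ (h : H) (g : G), f (↑h * g) = ρ h (f g)}
  add_mem' := by
    intro f₁ f₂ h₁ h₂ h g
    simp only [Pi.add_apply, h₁ h g, h₂ h g, map_add]
  zero_mem' := by intro h g; simp
  smul_mem' := by
    intro c f hf h g
    simp only [Pi.smul_apply, hf h g, map_smul]

/-- The representation of `G` induced from a representation `ρ` of a subgroup `H`,
acting by right translation on `IndSpace H ρ`. -/
def indRep {k G V : Type*} [Field k] [Group G] [AddCommGroup V] [Module k V]
    (H : Subgroup G) (ρ : Representation k H V) :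
    Representation k G (IndSpace H ρ) where
  toFun g :=
    { toFun := fun f => ⟨fun x => f.1 (x * g), fun h x => by
        show f.1 ((↑h * x) * g) = ρ h (f.1 (x * g))
        rw [mul_assoc]; exact f.2 h (x * g)⟩
      map_add' := fun f₁ f₂ => by ext x; rfl
      map_smul' := fun c f => by ext x; rfl }
  map_one' := by
    refine LinearMap.ext fun f => Subtype.ext (funext fun x => ?_)
    simp
  map_mul' := fun g₁ g₂ => by
    refine LinearMap.ext fun f => Subtype.ext (funext fun x => ?_)
    simp [mul_assoc]

section IndSpace

variable {k G V : Type*} [Field k] [Group G] [AddCommGroup V] [Module k V]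
  {H : Subgroup G} {ρ : Representation k H V}

theorem IndSpace.apply_mul (f : IndSpace H ρ) (h : H) (x : G) :
    (f : G → V) (h * x) = ρ h ((f : G → V) x) :=
  f.2 h x

@[simp]
theorem indRep_apply_coe (g : G) (f : IndSpace H ρ) (x : G) :
    (indRep H ρ g f : G → V) x = (f : G → V) (x * g) :=
  rfl

open scoped Classical in
variable (H ρ) in
noncomputable def indSingle : V →ₗ[k] IndSpace H ρ where
  toFun v := ⟨fun g => if hg : g ∈ H then ρ ⟨g, hg⟩ v else 0, by
    intro h g
    beta_reduce
    by_cases hg : g ∈ H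
    · rw [dif_pos hg, dif_pos (mul_mem h.2 hg), ← Module.End.mul_apply, ← map_mul]
      rfl
    · rw [dif_neg hg, dif_neg fun hhg => hg (by simpa using mul_mem (inv_mem h.2) hhg), map_zero]⟩
  map_add' v w := by
    ext g
    by_cases hg : g ∈ H <;> simp [hg]
  map_smul' c v := by
    ext g
    by_cases hg : g ∈ H <;> simp [hg]

theorem indSingle_apply_of_mem (v : V) {g : G} (hg : g ∈ H) :
    (indSingle H ρ v : G → V) g = ρ ⟨g, hg⟩ v :=
  dif_pos hg

theorem indSingle_apply_of_notMem (v : V) {g : G} (hg : g ∉ H) :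
    (indSingle H ρ v : G → V) g = 0 :=
  dif_neg hg

@[simp]
theorem indSingle_apply_one (v : V) : (indSingle H ρ v : G → V) 1 = v := by
  rw [indSingle_apply_of_mem v H.one_mem]
  exact congrArg (· v) (map_one ρ)

theorem eq_indSingle_of_forall_notMem (f : IndSpace H ρ) (hf : ∀ g ∉ H, (f : G → V) g = 0) :
    f = indSingle H ρ ((f : G → V) 1) := by
  ext g
  by_cases hg : g ∈ H
  · rw [indSingle_apply_of_mem _ hg, ← IndSpace.apply_mul f ⟨g, hg⟩, mul_one]
  · rw [indSingle_apply_of_notMem _ hg, hf g hg]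

theorem indRep_indSingle (h : H) (v : V) :
    indRep H ρ h (indSingle H ρ v) = indSingle H ρ (ρ h v) := by
  ext g
  by_cases hg : g ∈ H
  · rw [indRep_apply_coe, indSingle_apply_of_mem _ (mul_mem hg h.2), indSingle_apply_of_mem _ hg,
      ← Module.End.mul_apply, ← map_mul]
    rfl
  · rw [indRep_apply_coe, indSingle_apply_of_notMem _ hg, indSingle_apply_of_notMem]
    exact fun hgh => hg (by simpa using mul_mem hgh (inv_mem h.2))

theorem exists_mem_apply_one_ne_zero {U : Submodule k (IndSpace H ρ)}
    (hU : ∀ g : G, ∀ f ∈ U, indRep H ρ g f ∈ U) (hU₀ : U ≠ ⊥) :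
    ∃ f ∈ U, (f : G → V) 1 ≠ 0 := by
  obtain ⟨f, hfU, hf₀⟩ := (Submodule.ne_bot_iff U).1 hU₀
  obtain ⟨g, hg⟩ : ∃ g, (f : G → V) g ≠ 0 := by
    by_contra! h
    exact hf₀ (Subtype.ext (funext h))
  exact ⟨indRep H ρ g f, hU g f hfU, by simpa using hg⟩

open scoped Classical in
theorem indRep_inv_indSingle_apply (f : IndSpace H ρ) (g x : G) :
    (indRep H ρ g⁻¹ (indSingle H ρ ((f : G → V) g)) : G → V) x =
      if x * g⁻¹ ∈ H then (f : G → V) x else 0 := by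
  rw [indRep_apply_coe]
  split_ifs with hx
  · rw [indSingle_apply_of_mem _ hx, ← IndSpace.apply_mul f ⟨x * g⁻¹, hx⟩, inv_mul_cancel_right]
  · exact indSingle_apply_of_notMem _ hx

theorem sum_indRep_inv_indSingle [Fintype G] (f : IndSpace H ρ) :
    ∑ g, indRep H ρ g⁻¹ (indSingle H ρ ((f : G → V) g)) = Nat.card H • f := by
  classical
  ext x
  simp only [AddSubmonoidClass.coe_finsetSum, Finset.sum_apply, indRep_inv_indSingle_apply]
  rw [Fintype.sum_equiv ((Equiv.inv G).trans (Equiv.mulLeft x))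
    (fun g => if x * g⁻¹ ∈ H then (f : G → V) x else 0)
    (fun h => if h ∈ H then (f : G → V) x else 0) fun _ => rfl]
  simp [Finset.sum_ite, Nat.card_eq_fintype_card, Fintype.card_subtype]

theorem eq_top_of_forall_indSingle_mem [Finite G] [CharZero k] {U : Submodule k (IndSpace H ρ)}
    (hU : ∀ g : G, ∀ f ∈ U, indRep H ρ g f ∈ U) (hsingle : ∀ v, indSingle H ρ v ∈ U) :
    U = ⊤ := by
  classical
  have := Fintype.ofFinite G
  refine Submodule.eq_top_iff'.2 fun f => ?_
  have hcard : (Nat.card H : k) ≠ 0 := Nat.cast_ne_zero.2 Nat.card_pos.ne'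
  rw [← inv_smul_smul₀ hcard f, Nat.cast_smul_eq_nsmul, ← sum_indRep_inv_indSingle]
  exact U.smul_mem _ (U.sum_mem fun g _ => hU _ _ (hsingle _))

end IndSpace

open SemidirectProduct

instance SemidirectProduct.instFinite {N G : Type*} [Group N] [Group G] {φ : G →* MulAut N}
    [Finite N] [Finite G] : Finite (N ⋊[φ] G) :=
  Finite.of_equiv _ equivProd.symm

theorem SemidirectProduct.mul_inl_eq_inl_mul {N G : Type*} [CommGroup N] [Group G]
    {φ : G →* MulAut N} (x : N ⋊[φ] G) (n : N) :
    x * inl n = inl (φ x.right n) * x := by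
  ext <;> simp [mul_comm]

theorem sum_inv_mul_comp_eq_zero {k N : Type*} [Field k] [CommGroup N] [Fintype N]
    (χ : N →* kˣ) (σ : N ≃* N) (hσ : ∃ n, χ (σ n) ≠ χ n) :
    ∑ n, (((χ n)⁻¹ * χ (σ n) : kˣ) : k) = 0 := by
  obtain ⟨n, hn⟩ := hσ
  refine sum_hom_units_eq_zero ((Units.coeHom k).comp (χ⁻¹ * χ.comp σ.toMonoidHom)) fun h => hn ?_
  exact (inv_mul_eq_one.1 (Units.ext (DFunLike.congr_fun h n))).symm

section Mackey

variable {k N M V : Type*} [Field k] [CommGroup N] [Group M] {φ : M →* MulAut N}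
  [AddCommGroup V] [Module k V] {H : Subgroup (N ⋊[φ] M)} {ρ : Representation k H V}
  {χ : N →* kˣ}

theorem IndSpace.apply_mul_inl (hN : ∀ n : N, inl n ∈ H)
    (hχ : ∀ n v, ρ ⟨inl n, hN n⟩ v = (χ n : k) • v) (f : IndSpace H ρ) (x : N ⋊[φ] M) (n : N) :
    (f : N ⋊[φ] M → V) (x * inl n) = (χ (φ x.right n) : k) • (f : N ⋊[φ] M → V) x := by
  rw [mul_inl_eq_inl_mul, IndSpace.apply_mul f ⟨_, hN _⟩, hχ]

variable [Fintype N]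

variable (χ) in
def charProj (f : IndSpace H ρ) : IndSpace H ρ :=
  ∑ n, (((χ n)⁻¹ : kˣ) : k) • indRep H ρ (inl n) f

theorem charProj_apply (hN : ∀ n : N, inl n ∈ H)
    (hχ : ∀ n v, ρ ⟨inl n, hN n⟩ v = (χ n : k) • v) (f : IndSpace H ρ) (x : N ⋊[φ] M) :
    (charProj χ f : N ⋊[φ] M → V) x =
      (∑ n, (((χ n)⁻¹ * χ (φ x.right n) : kˣ) : k)) • (f : N ⋊[φ] M → V) x := by
  simp [charProj, AddSubmonoidClass.coe_finsetSum, Finset.sum_apply, IndSpace.apply_mul_inl hN hχ,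
    Finset.sum_smul, smul_smul]

theorem charProj_mem {U : Submodule k (IndSpace H ρ)}
    (hU : ∀ g, ∀ f ∈ U, indRep H ρ g f ∈ U) {f : IndSpace H ρ} (hf : f ∈ U) :
    charProj χ f ∈ U :=
  U.sum_mem fun _ _ => U.smul_mem _ (hU _ f hf)

theorem exists_ne_zero_indSingle_mem [CharZero k] (hN : ∀ n : N, inl n ∈ H)
    (hχ : ∀ n v, ρ ⟨inl n, hN n⟩ v = (χ n : k) • v)
    (hstab : ∀ x : N ⋊[φ] M, (∀ n, χ (φ x.right n) = χ n) → x ∈ H)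
    {U : Submodule k (IndSpace H ρ)} (hU : ∀ g, ∀ f ∈ U, indRep H ρ g f ∈ U) (hU₀ : U ≠ ⊥) :
    ∃ v ≠ 0, indSingle H ρ v ∈ U := by
  obtain ⟨f, hfU, hf₁⟩ := exists_mem_apply_one_ne_zero hU hU₀
  have hsupp : ∀ x ∉ H, (charProj χ f : N ⋊[φ] M → V) x = 0 := fun x hx => by
    rw [charProj_apply hN hχ,
      sum_inv_mul_comp_eq_zero χ (φ x.right) (not_forall.1 (mt (hstab x) hx)), zero_smul]
  have hone : (charProj χ f : N ⋊[φ] M → V) 1 = (Fintype.card N : k) • (f : N ⋊[φ] M → V) 1 := by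
    simp [charProj_apply hN hχ]
  refine ⟨(Fintype.card N : k) • (f : N ⋊[φ] M → V) 1,
    smul_ne_zero (Nat.cast_ne_zero.2 Fintype.card_ne_zero) hf₁, ?_⟩
  rw [← hone, ← eq_indSingle_of_forall_notMem _ hsupp]
  exact charProj_mem hU hfU

end Mackey

theorem stmt18_general {N M : Type*} [CommGroup N] [Fintype N] [Group M] [Fintype M]
    (φ : M →* MulAut N) (χ : N →* ℂˣ)
    {V : Type*} [AddCommGroup V] [Module ℂ V]
    (Rχ : Subgroup M) (hRχ : ∀ m : M, m ∈ Rχ ↔ ∀ n : N, χ (φ m n) = χ n)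
    (H : Subgroup (N ⋊[φ] M)) (hH : ∀ g : N ⋊[φ] M, g ∈ H ↔ g.right ∈ Rχ)
    (π : Representation ℂ Rχ V) (hπ : IsIrreducibleRep π)
    (ρ : Representation ℂ H V)
    (hρ : ∀ (g : H) (hg : (g : N ⋊[φ] M).right ∈ Rχ) (v : V),
      ρ g v = (χ (g : N ⋊[φ] M).left : ℂ) • π ⟨(g : N ⋊[φ] M).right, hg⟩ v) :
    IsIrreducibleRep (indRep H ρ) := by
  have hN : ∀ n : N, inl n ∈ H := fun n => (hH _).2 Rχ.one_mem
  have hχ : ∀ n v, ρ ⟨inl n, hN n⟩ v = (χ n : ℂ) • v := fun n v => by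
    rw [hρ _ Rχ.one_mem]
    exact congrArg (_ • ·) (congrArg (· v) (map_one π))
  have hπρ : ∀ (r : Rχ) v, π r v = ρ ⟨inr r, (hH _).2 r.2⟩ v := fun r v => by
    rw [hρ _ r.2]
    change _ = ((χ 1 : ℂˣ) : ℂ) • π r v
    rw [map_one, Units.val_one, one_smul]
  obtain ⟨⟨v₀, hv₀⟩, hπU⟩ := hπ
  refine ⟨⟨indSingle H ρ v₀, fun h => hv₀ ?_⟩, fun U hU => ?_⟩
  · simpa using congrArg (fun f : IndSpace H ρ => (f : N ⋊[φ] M → V) 1) h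
  refine or_iff_not_imp_left.2 fun hU₀ => eq_top_of_forall_indSingle_mem hU fun v => ?_
  obtain ⟨v₁, hv₁, hv₁U⟩ :=
    exists_ne_zero_indSingle_mem hN hχ (fun x hx => (hH x).2 ((hRχ _).2 hx)) hU hU₀
  have hW : U.comap (indSingle H ρ) = ⊤ := by
    refine (hπU _ fun r w hw => ?_).resolve_left ((Submodule.ne_bot_iff _).2 ⟨v₁, hv₁U, hv₁⟩)
    rw [Submodule.mem_comap, hπρ, ← indRep_indSingle]
    exact hU _ _ hw
  exact Submodule.mem_comap.1 (hW ▸ Submodule.mem_top)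

/-- **(Clifford/Mackey)** Let `G = N ⋊ M` with `N` abelian, `χ` a character of `N`,
`R_χ ≤ M` its stabilizer, `π` an irreducible representation of `R_χ`, and
`ρ = π ⊗ χ` the corresponding representation of `H = R_χ ⋉ N`. Then the induced
representation `Ind_H^G ρ` is irreducible. -/
theorem stmt18 {N M : Type*} [CommGroup N] [Fintype N] [Group M] [Fintype M]
    (φ : M →* MulAut N) (χ : N →* ℂˣ)
    {V : Type*} [AddCommGroup V] [Module ℂ V] [FiniteDimensional ℂ V]
    (Rχ : Subgroup M) (hRχ : ∀ m : M, m ∈ Rχ ↔ ∀ n : N, χ (φ m n) = χ n)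
    (H : Subgroup (N ⋊[φ] M)) (hH : ∀ g : N ⋊[φ] M, g ∈ H ↔ g.right ∈ Rχ)
    (π : Representation ℂ Rχ V) (hπ : IsIrreducibleRep π)
    (ρ : Representation ℂ H V)
    (hρ : ∀ (g : H) (hg : (g : N ⋊[φ] M).right ∈ Rχ) (v : V),
      ρ g v = (χ (g : N ⋊[φ] M).left : ℂ) • π ⟨(g : N ⋊[φ] M).right, hg⟩ v) :
    IsIrreducibleRep (indRep H ρ) :=
  stmt18_general φ χ Rχ hRχ H hH π hπ ρ hρ
end
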